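/- Let 1 < α < 2, g ∈ ℝ, K > 0, let 𝒫 be a fixed closed prolate spheroid centered at the origin, and for ε > 0 let 𝒫^ε = x₀ + ε^α R 𝒫 where R is a rotation and x₀ ∈ ℝ³. Suppose w₀ ∈ ℝ³ with |w₀| ≤ K and u ∈ L²(∂𝒫^ε; ℝ³) satisfies ∫_{∂𝒫^ε} |u − w₀|² dσ ≤ K ε⁶. Then there is a constant C depending only on 𝒫, g and K such that for all sufficiently small ε, | g ε^{3−2α} ∫_{∂𝒫^ε} (u·ν)² dσ − g ε^{3−2α} ∫_{∂𝒫^ε} (w₀·ν)² dσ | ≤ C ε^{7−2α}. -/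

import Mathlib

open MeasureTheory Filter Metric Set
open scoped RealInnerProductSpace ENNReal NNReal Topology

noncomputable section

/-- Euclidean three-space. -/
abbrev E3 : Type := EuclideanSpace ℝ (Fin 3)

/-- The closed prolate spheroid centered at the origin with semi-axis `A` along the
`x`- and `y`-directions and semi-axis `B` along the `z`-direction. -/
def sph (A B : ℝ) : Set E3 :=
  {x : E3 | (x 0) ^ 2 / A ^ 2 + (x 1) ^ 2 / A ^ 2 + (x 2) ^ 2 / B ^ 2 ≤ 1}

/-- The boundary surface of the spheroid `sph A B`. -/
def sphS (A B : ℝ) : Set E3 :=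
  {x : E3 | (x 0) ^ 2 / A ^ 2 + (x 1) ^ 2 / A ^ 2 + (x 2) ^ 2 / B ^ 2 = 1}

/-- Gradient of the defining function of the spheroid (up to a factor `2`). -/
def sphGrad (A B : ℝ) (x : E3) : E3 :=
  (WithLp.equiv 2 (Fin 3 → ℝ)).symm ![x 0 / A ^ 2, x 1 / A ^ 2, x 2 / B ^ 2]

/-- Outward unit normal to the surface of the spheroid `sph A B`. -/
def sphN (A B : ℝ) (x : E3) : E3 := ‖sphGrad A B x‖⁻¹ • sphGrad A B x

/-- A rotation of `ℝ³`: a linear isometry with determinant one. -/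
def IsRotation (R : E3 ≃ₗᵢ[ℝ] E3) : Prop :=
  LinearMap.det (R.toLinearEquiv : E3 →ₗ[ℝ] E3) = 1

/-- A particle: the image of the reference spheroid `sph A B` under `y ↦ c + s • R y`. -/
def part (A B : ℝ) (c : E3) (s : ℝ) (R : E3 ≃ₗᵢ[ℝ] E3) : Set E3 :=
  (fun y => c + s • R y) '' sph A B

/-- The boundary surface of a particle. -/
def partS (A B : ℝ) (c : E3) (s : ℝ) (R : E3 ≃ₗᵢ[ℝ] E3) : Set E3 :=
  (fun y => c + s • R y) '' sphS A B

/-- The outward unit normal on the surface of a particle. -/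
def partN (A B : ℝ) (c : E3) (s : ℝ) (R : E3 ≃ₗᵢ[ℝ] E3) (y : E3) : E3 :=
  R (sphN A B (s⁻¹ • R.symm (y - c)))


/-! Write `t = ⟪u - w₀, ν⟫` and `r = ⟪w₀, ν⟫`. Pointwise `(u·ν)² - (w₀·ν)² = t² + 2tr`, and
AM-GM with weight `δ = ε²` bounds it by `(1 + K/ε²)|u - w₀|² + Kε²`. Integrated over `∂𝒫^ε`,
whose area is `ε^{2α}|∂𝒫|`, this gives `Kε⁶ + K²ε⁴ + K|∂𝒫|ε^{2+2α} = O(ε⁴)` because `α ≥ 1`,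
and the prefactor `ε^{3-2α}` turns that into `O(ε^{7-2α})`. The one geometric input is
`|∂𝒫| < ∞`: the spheroid surface is a linear image of the unit sphere, and the unit sphere is
covered by the radial projections of the six faces of the cube, each a Lipschitz image of a
square. -/

open scoped Pointwise

theorem LipschitzOnWith.hausdorffMeasure_image_lt_top {X Y : Type*} [EMetricSpace X]
    [EMetricSpace Y] [MeasurableSpace X] [BorelSpace X] [MeasurableSpace Y] [BorelSpace Y]
    {K : ℝ≥0} {f : X → Y} {s : Set X} (hf : LipschitzOnWith K f s) {d : ℝ} (hd : 0 ≤ d)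
    (hs : μH[d] s < ⊤) : μH[d] (f '' s) < ⊤ :=
  (hf.hausdorffMeasure_image_le hd).trans_lt <|
    ENNReal.mul_lt_top (ENNReal.rpow_lt_top_of_nonneg hd ENNReal.coe_ne_top) hs

theorem sphere_pi_subset_iUnion_image_insertNth {n : ℕ} :
    sphere (0 : Fin (n + 1) → ℝ) 1 ⊆
      ⋃ i, ⋃ σ ∈ ({1, -1} : Set ℝ),
        Fin.insertNth (α := fun _ => ℝ) i σ '' closedBall (0 : Fin n → ℝ) 1 := by
  intro x hx
  rw [mem_sphere_zero_iff_norm] at hx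
  obtain ⟨i, hi⟩ := (IsGreatest.pi_norm x).1
  simp only [mem_iUnion]
  refine ⟨i, x i, ?_, Fin.removeNth i x, ?_, Fin.insertNth_self_removeNth i x⟩
  · rcases abs_eq zero_le_one |>.1 (hi.trans hx) with h | h <;> simp [h]
  · rw [mem_closedBall_zero_iff, ← hx]
    exact pi_norm_le_iff_of_nonneg (norm_nonneg x) |>.2 fun k => norm_le_pi_norm x _

theorem hausdorffMeasure_sphere_pi_lt_top (n : ℕ) :
    μH[n] (sphere (0 : Fin (n + 1) → ℝ) 1) < ⊤ := by
  have hvol : (μH[n] : Measure (Fin n → ℝ)) = volume := by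
    simpa using hausdorffMeasure_pi_real (ι := Fin n)
  refine (measure_mono sphere_pi_subset_iUnion_image_insertNth).trans_lt ?_
  refine (measure_iUnion_fintype_le _ _).trans_lt <| ENNReal.sum_lt_top.2 fun i _ => ?_
  refine measure_biUnion_lt_top (toFinite _) fun σ _ => ?_
  have hlip : LipschitzWith 1 (Fin.insertNth (α := fun _ => ℝ) i σ) :=
    LipschitzWith.of_dist_le_mul fun x y => by simp [Fin.dist_insertNth_insertNth]
  refine hlip.lipschitzOnWith.hausdorffMeasure_image_lt_top (Nat.cast_nonneg n) ?_
  rw [hvol]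
  exact measure_closedBall_lt_top

theorem lipschitzOnWith_inv_norm_smul {E : Type*} [NormedAddCommGroup E] [NormedSpace ℝ E] :
    LipschitzOnWith 2 (fun x : E => ‖x‖⁻¹ • x) {x | 1 ≤ ‖x‖} := by
  refine LipschitzOnWith.of_dist_le_mul fun x (hx : 1 ≤ ‖x‖) y (hy : 1 ≤ ‖y‖) => ?_
  have hx0 : 0 < ‖x‖ := one_pos.trans_le hx
  have hy0 : 0 < ‖y‖ := one_pos.trans_le hy
  have hsplit : ‖x‖⁻¹ • x - ‖y‖⁻¹ • y = ‖x‖⁻¹ • (x - y) + (‖x‖⁻¹ - ‖y‖⁻¹) • y := by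
    rw [smul_sub, sub_smul]; abel
  have h₁ : ‖‖x‖⁻¹ • (x - y)‖ ≤ ‖x - y‖ := by
    rw [norm_smul, norm_inv, norm_norm]
    exact mul_le_of_le_one_left (norm_nonneg _) (inv_le_one_of_one_le₀ hx)
  have h₂ : ‖(‖x‖⁻¹ - ‖y‖⁻¹) • y‖ ≤ ‖x - y‖ := by
    rw [norm_smul, inv_sub_inv hx0.ne' hy0.ne', norm_div, Real.norm_eq_abs, Real.norm_eq_abs,
      abs_of_pos (mul_pos hx0 hy0), div_mul_eq_mul_div, mul_div_mul_right _ _ hy0.ne']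
    exact div_le_of_le_mul₀ hx0.le (norm_nonneg _) <|
      (abs_norm_sub_norm_le y x).trans (by rw [norm_sub_rev]; nlinarith [norm_nonneg (x - y)])
  rw [dist_eq_norm, dist_eq_norm, hsplit, NNReal.coe_ofNat]
  linarith [norm_add_le (‖x‖⁻¹ • (x - y)) ((‖x‖⁻¹ - ‖y‖⁻¹) • y)]

theorem sphere_subset_image_inv_norm_smul {ι : Type*} [Fintype ι] :
    sphere (0 : EuclideanSpace ℝ ι) 1 ⊆
      (fun x => ‖x‖⁻¹ • x) '' (WithLp.toLp 2 '' sphere (0 : ι → ℝ) 1) := by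
  intro x hx
  rw [mem_sphere_zero_iff_norm] at hx
  have hy : 0 < ‖x.ofLp‖ := by
    refine norm_pos_iff.2 fun h => ?_
    simp [show x = 0 from congrArg (WithLp.toLp 2) h] at hx
  refine ⟨WithLp.toLp 2 (‖x.ofLp‖⁻¹ • x.ofLp), ⟨_, ?_, rfl⟩, ?_⟩
  · simp [norm_smul, hy.ne']
  · simp [norm_smul, hx, hy.ne', smul_smul]

theorem hausdorffMeasure_sphere_lt_top (n : ℕ) :
    μH[n] (sphere (0 : EuclideanSpace ℝ (Fin (n + 1))) 1) < ⊤ := by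
  refine (measure_mono sphere_subset_image_inv_norm_smul).trans_lt ?_
  have hnorm : WithLp.toLp 2 '' sphere (0 : Fin (n + 1) → ℝ) 1 ⊆ {x | 1 ≤ ‖x‖} := by
    rintro _ ⟨y, hy, rfl⟩
    rw [mem_sphere_zero_iff_norm] at hy
    simpa [hy] using (PiLp.antilipschitzWith_toLp 2 _).le_mul_dist y 0
  refine (lipschitzOnWith_inv_norm_smul.mono hnorm).hausdorffMeasure_image_lt_top
    (Nat.cast_nonneg n) ?_
  exact (PiLp.lipschitzWith_toLp 2 _).lipschitzOnWith.hausdorffMeasure_image_lt_top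
    (Nat.cast_nonneg n) (hausdorffMeasure_sphere_pi_lt_top n)

theorem sphS_subset_image_sphere {A B : ℝ} (hA : A ≠ 0) (hB : B ≠ 0) :
    sphS A B ⊆ Matrix.toEuclideanCLM (𝕜 := ℝ) (Matrix.diagonal ![A, A, B]) '' sphere 0 1 := by
  intro x (hx : _ = _)
  refine ⟨WithLp.toLp 2 ![x 0 / A, x 1 / A, x 2 / B], ?_, ?_⟩
  · rw [mem_sphere_zero_iff_norm, EuclideanSpace.norm_eq, Fin.sum_univ_three]
    simp [div_pow, hx]
  · ext i
    fin_cases i <;> simp [Matrix.mulVec_diagonal, mul_div_cancel₀ _ hA, mul_div_cancel₀ _ hB]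

theorem hausdorffMeasure_sphS_lt_top {A B : ℝ} (hA : A ≠ 0) (hB : B ≠ 0) :
    μH[2] (sphS A B) < ⊤ :=
  (measure_mono (sphS_subset_image_sphere hA hB)).trans_lt <|
    (ContinuousLinearMap.lipschitz _).lipschitzOnWith.hausdorffMeasure_image_lt_top
      zero_le_two (mod_cast hausdorffMeasure_sphere_lt_top 2)

theorem partS_eq_vadd_smul_image (A B : ℝ) (c : E3) (s : ℝ) (R : E3 ≃ₗᵢ[ℝ] E3) :
    partS A B c s R = c +ᵥ s • (R '' sphS A B) := by
  simp only [partS, ← image_smul, ← image_vadd, image_image, vadd_eq_add]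

theorem hausdorffMeasure_partS (A B : ℝ) (c : E3) {s : ℝ} (hs : s ≠ 0) (R : E3 ≃ₗᵢ[ℝ] E3) :
    μH[2] (partS A B c s R) = ‖s‖₊ ^ (2 : ℝ) • μH[2] (sphS A B) := by
  rw [partS_eq_vadd_smul_image, hausdorffMeasure_vadd _ (Or.inl zero_le_two),
    Measure.hausdorffMeasure_smul₀ zero_le_two hs,
    R.isometry.hausdorffMeasure_image (Or.inl zero_le_two)]

theorem measureReal_partS (A B : ℝ) (c : E3) {s : ℝ} (hs : s ≠ 0) (R : E3 ≃ₗᵢ[ℝ] E3) :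
    μH[2].real (partS A B c s R) = s ^ 2 * μH[2].real (sphS A B) := by
  simp [measureReal_def, hausdorffMeasure_partS A B c hs R, ENNReal.smul_def]

theorem continuous_sphGrad (A B : ℝ) : Continuous (sphGrad A B) := by
  refine (PiLp.continuous_toLp 2 _).comp ?_
  fun_prop

theorem measurable_partN (A B : ℝ) (c : E3) (s : ℝ) (R : E3 ≃ₗᵢ[ℝ] E3) :
    Measurable (partN A B c s R) := by
  have := continuous_sphGrad A B
  unfold partN sphN
  fun_prop

theorem norm_partN_le_one (A B : ℝ) (c : E3) (s : ℝ) (R : E3 ≃ₗᵢ[ℝ] E3) (y : E3) :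
    ‖partN A B c s R y‖ ≤ 1 := by
  rw [partN, R.norm_map, sphN, norm_smul, norm_inv, norm_norm]
  exact inv_mul_le_one

section InnerSq

variable {E : Type*} [NormedAddCommGroup E] [InnerProductSpace ℝ E]

theorem abs_real_inner_le_norm_of_norm_le_one (x : E) {n : E} (hn : ‖n‖ ≤ 1) :
    |⟪x, n⟫| ≤ ‖x‖ :=
  (abs_real_inner_le_norm x n).trans (mul_le_of_le_one_right (norm_nonneg x) hn)

theorem abs_inner_sq_sub_inner_sq_le {x w n : E} {K δ : ℝ} (hn : ‖n‖ ≤ 1) (hw : ‖w‖ ≤ K)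
    (hδ : 0 < δ) :
    |⟪x, n⟫ ^ 2 - ⟪w, n⟫ ^ 2| ≤ (1 + K / δ) * ‖x - w‖ ^ 2 + K * δ := by
  set t := ⟪x - w, n⟫
  set r := ⟪w, n⟫
  set v := ‖x - w‖
  have ht : |t| ≤ v := abs_real_inner_le_norm_of_norm_le_one _ hn
  have hr : |r| ≤ K := (abs_real_inner_le_norm_of_norm_le_one _ hn).trans hw
  have hamgm : 2 * v ≤ v ^ 2 / δ + δ := by
    rw [div_add' _ _ _ hδ.ne', le_div_iff₀ hδ]
    nlinarith [sq_nonneg (v - δ)]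
  have hx : ⟪x, n⟫ = t + r := by simp only [t, r, inner_sub_left]; ring
  calc |⟪x, n⟫ ^ 2 - r ^ 2| = |t ^ 2 + 2 * t * r| := by rw [hx]; ring_nf
    _ ≤ v ^ 2 + 2 * v * K := by
        refine (abs_add_le _ _).trans (add_le_add ?_ ?_)
        · rw [abs_pow]; exact pow_le_pow_left₀ (abs_nonneg t) ht 2
        · rw [abs_mul, abs_mul, abs_two]
          exact mul_le_mul (mul_le_mul_of_nonneg_left ht zero_le_two) hr (abs_nonneg r)
            (by positivity)
    _ ≤ v ^ 2 + K * (v ^ 2 / δ + δ) := by nlinarith [(norm_nonneg w).trans hw]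
    _ = (1 + K / δ) * v ^ 2 + K * δ := by ring

theorem abs_integral_inner_sq_sub_le {Ω : Type*} [MeasurableSpace Ω] {μ : Measure Ω}
    [IsFiniteMeasure μ] {u n : Ω → E} {w : E} {K δ : ℝ} (hu : MemLp u 2 μ)
    (hnm : AEStronglyMeasurable n μ) (hn : ∀ y, ‖n y‖ ≤ 1) (hw : ‖w‖ ≤ K) (hδ : 0 < δ) :
    |∫ y, ⟪u y, n y⟫ ^ 2 ∂μ - ∫ y, ⟪w, n y⟫ ^ 2 ∂μ| ≤
      (1 + K / δ) * ∫ y, ‖u y - w‖ ^ 2 ∂μ + K * δ * μ.real univ := by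
  have hsq_le (x : E) (y : Ω) : ‖⟪x, n y⟫ ^ 2‖ ≤ ‖x‖ ^ 2 := by
    rw [norm_pow, Real.norm_eq_abs]
    exact pow_le_pow_left₀ (abs_nonneg _) (abs_real_inner_le_norm_of_norm_le_one x (hn y)) 2
  have hu_int : Integrable (fun y => ⟪u y, n y⟫ ^ 2) μ :=
    (hu.integrable_norm_pow two_ne_zero).mono' ((hu.1.inner hnm).pow 2)
      (.of_forall fun y => hsq_le (u y) y)
  have hw_int : Integrable (fun y => ⟪w, n y⟫ ^ 2) μ :=
    (integrable_const (‖w‖ ^ 2)).mono' ((aestronglyMeasurable_const.inner hnm).pow 2)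
      (.of_forall fun y => hsq_le w y)
  have hv_int : Integrable (fun y => ‖u y - w‖ ^ 2) μ :=
    (hu.sub (memLp_const w)).integrable_norm_pow two_ne_zero
  rw [← integral_sub hu_int hw_int, ← Real.norm_eq_abs]
  refine (norm_integral_le_of_norm_le (g := fun y => (1 + K / δ) * ‖u y - w‖ ^ 2 + K * δ)
    ((hv_int.const_mul _).add (integrable_const _))
    (.of_forall fun y => abs_inner_sq_sub_inner_sq_le (hn y) hw hδ)).trans_eq ?_
  rw [integral_add (hv_int.const_mul _) (integrable_const _), integral_const_mul,
    integral_const, smul_eq_mul, mul_comm (μ.real univ)]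

end InnerSq

theorem surface_energy_error_le {ε α K V m : ℝ} (hε : 0 < ε) (hε1 : ε ≤ 1) (hα : 1 ≤ α)
    (hK : 0 ≤ K) (hV : V ≤ K * ε ^ 6) (hm : 0 ≤ m) :
    (1 + K / ε ^ 2) * V + K * ε ^ 2 * ((ε ^ α) ^ 2 * m) ≤ (K + K ^ 2 + K * m) * ε ^ 4 := by
  have hV' : (1 + K / ε ^ 2) * V ≤ K * ε ^ 6 + K ^ 2 * ε ^ 4 := by
    calc (1 + K / ε ^ 2) * V ≤ (1 + K / ε ^ 2) * (K * ε ^ 6) := by gcongr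
      _ = K * ε ^ 6 + K ^ 2 * ε ^ 4 := by field_simp
  have h64 : ε ^ 6 ≤ ε ^ 4 := pow_le_pow_of_le_one hε.le hε1 (by norm_num)
  have hεα : ε ^ α ≤ ε := by
    simpa using Real.rpow_le_rpow_of_exponent_ge hε hε1 hα
  have hεα2 : (ε ^ α) ^ 2 ≤ ε ^ 2 := pow_le_pow_left₀ (by positivity) hεα 2
  nlinarith [mul_le_mul_of_nonneg_left hεα2 (by positivity : 0 ≤ K * ε ^ 2 * m),
    mul_le_mul_of_nonneg_left h64 hK]

theorem stmt9_general (b a α g K : ℝ) (hb : 0 < b) (hba : b < a)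
    (hα1 : 1 < α) (hK : 0 < K) :
    ∃ C : ℝ, 0 < C ∧ ∃ ε₁ : ℝ, 0 < ε₁ ∧ ∀ ε : ℝ, 0 < ε → ε < ε₁ →
      ∀ (x₀ : E3) (R : E3 ≃ₗᵢ[ℝ] E3), IsRotation R →
        ∀ (w₀ : E3) (u : E3 → E3), ‖w₀‖ ≤ K →
          MemLp u 2 (μH[2].restrict (partS b a x₀ (ε ^ α) R)) →
          (∫ y in partS b a x₀ (ε ^ α) R, ‖u y - w₀‖ ^ 2 ∂μH[2]) ≤ K * ε ^ (6 : ℝ) →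
          |g * ε ^ (3 - 2 * α) *
                (∫ y in partS b a x₀ (ε ^ α) R,
                  ⟪u y, partN b a x₀ (ε ^ α) R y⟫ ^ 2 ∂μH[2]) -
              g * ε ^ (3 - 2 * α) *
                (∫ y in partS b a x₀ (ε ^ α) R,
                  ⟪w₀, partN b a x₀ (ε ^ α) R y⟫ ^ 2 ∂μH[2])| ≤
            C * ε ^ (7 - 2 * α) := by
  set m := μH[2].real (sphS b a)
  set D := K + K ^ 2 + K * m
  have hm : 0 ≤ m := measureReal_nonneg
  refine ⟨(|g| + 1) * D, by positivity, 1, one_pos, ?_⟩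
  intro ε hε hε1 x₀ R _ w₀ u hw hu hV
  have hs : ε ^ α ≠ 0 := (Real.rpow_pos_of_pos hε α).ne'
  have : IsFiniteMeasure (μH[2].restrict (partS b a x₀ (ε ^ α) R)) := by
    refine isFiniteMeasure_restrict.2 ?_
    rw [hausdorffMeasure_partS _ _ _ hs]
    exact ENNReal.mul_ne_top (by simp) (hausdorffMeasure_sphS_lt_top hb.ne' (hb.trans hba).ne').ne
  have hdiff := abs_integral_inner_sq_sub_le hu
    (measurable_partN b a x₀ (ε ^ α) R).aestronglyMeasurable
    (norm_partN_le_one b a x₀ (ε ^ α) R) hw (pow_pos hε 2)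
  rw [measureReal_restrict_apply_univ, measureReal_partS _ _ _ hs] at hdiff
  have hV6 : (∫ y in partS b a x₀ (ε ^ α) R, ‖u y - w₀‖ ^ 2 ∂μH[2]) ≤ K * ε ^ 6 := by
    exact_mod_cast hV
  have hD := hdiff.trans (surface_energy_error_le hε hε1.le hα1.le hK.le hV6 hm)
  rw [← mul_sub, abs_mul, abs_mul, abs_of_pos (Real.rpow_pos_of_pos hε _)]
  calc |g| * ε ^ (3 - 2 * α) * |_ - _| ≤ |g| * ε ^ (3 - 2 * α) * (D * ε ^ 4) := by gcongr
    _ = |g| * D * ε ^ (7 - 2 * α) := by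
        rw [show 7 - 2 * α = 3 - 2 * α + (4 : ℕ) by push_cast; ring, Real.rpow_add hε,
          Real.rpow_natCast]
        ring
    _ ≤ (|g| + 1) * D * ε ^ (7 - 2 * α) := by gcongr; linarith

/-- replacement of the trace in the surface energy. Let `1 < α < 2`,
`g ∈ ℝ`, `K > 0` and let `𝒫 = sph b a` be a fixed closed prolate spheroid; for `ε > 0`
consider the particle `𝒫^ε = x₀ + ε^α R 𝒫`, `R` a rotation. If `|w₀| ≤ K` and
`u ∈ L²(∂𝒫^ε; ℝ³)` satisfies `∫_{∂𝒫^ε} |u − w₀|² dσ ≤ K ε⁶`, then, with a constant `C`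
depending only on `𝒫`, `g`, `K`, for all sufficiently small `ε`:
`|g ε^{3−2α} ∫_{∂𝒫^ε} (u·ν)² dσ − g ε^{3−2α} ∫_{∂𝒫^ε} (w₀·ν)² dσ| ≤ C ε^{7−2α}`. -/
theorem stmt9 (b a α g K : ℝ) (hb : 0 < b) (hba : b < a)
    (hα1 : 1 < α) (hα2 : α < 2) (hK : 0 < K) :
    ∃ C : ℝ, 0 < C ∧ ∃ ε₁ : ℝ, 0 < ε₁ ∧ ∀ ε : ℝ, 0 < ε → ε < ε₁ →
      ∀ (x₀ : E3) (R : E3 ≃ₗᵢ[ℝ] E3), IsRotation R →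
        ∀ (w₀ : E3) (u : E3 → E3), ‖w₀‖ ≤ K →
          MemLp u 2 (μH[2].restrict (partS b a x₀ (ε ^ α) R)) →
          (∫ y in partS b a x₀ (ε ^ α) R, ‖u y - w₀‖ ^ 2 ∂μH[2]) ≤ K * ε ^ (6 : ℝ) →
          |g * ε ^ (3 - 2 * α) *
                (∫ y in partS b a x₀ (ε ^ α) R,
                  ⟪u y, partN b a x₀ (ε ^ α) R y⟫ ^ 2 ∂μH[2]) -
              g * ε ^ (3 - 2 * α) *
                (∫ y in partS b a x₀ (ε ^ α) R,
                  ⟪w₀, partN b a x₀ (ε ^ α) R y⟫ ^ 2 ∂μH[2])| ≤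
            C * ε ^ (7 - 2 * α) :=
  stmt9_general b a α g K hb hba hα1 hK
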